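/- arXiv:2508.00551 — 7 statements merged into one kernel-verified Lean document; each statement's English description precedes it below -/
import Mathlib

section
/- Let (X, μ) be a probability space, let p ≥ 1 be real, and let f, g : X → ℝ be measurable with |f|^p and |g-f|^p integrable. Then ∫_X | f(x)·(∫_X g dμ) − g(x)·(∫_X f dμ) |^p dμ(x) ≤ 2^{p} (∫_X |f|^p dμ)(∫_X |g-f|^p dμ). -/
open MeasureTheory Real

private lemma aux_abs_le (p : ℝ) (hp : 1 ≤ p) (a : ℝ) : |a| ≤ |a| ^ p + 1 := by
  rcases le_or_gt (|a|) 1 with h | h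
  · have : (0:ℝ) ≤ |a| ^ p := Real.rpow_nonneg (abs_nonneg a) p
    linarith
  · have h1 : |a| = |a| ^ (1:ℝ) := (Real.rpow_one _).symm
    have : |a| ^ (1:ℝ) ≤ |a| ^ p := Real.rpow_le_rpow_of_exponent_le h.le hp
    rw [Real.rpow_one] at this
    linarith

private lemma aux_integrable {X : Type*} [MeasurableSpace X] (μ : Measure X)
    [IsProbabilityMeasure μ] (p : ℝ) (hp : 1 ≤ p) (w : X → ℝ) (hw : Measurable w)
    (hwp : Integrable (fun x => |w x| ^ p) μ) : Integrable w μ := by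
  refine (hwp.add (integrable_const 1)).mono hw.aestronglyMeasurable
    (Filter.Eventually.of_forall fun x => ?_)
  have h1 : (0:ℝ) ≤ |w x| ^ p := Real.rpow_nonneg (abs_nonneg _) p
  simp only [Pi.add_apply, Real.norm_eq_abs]
  rw [abs_of_nonneg (by linarith : (0:ℝ) ≤ |w x| ^ p + 1)]
  exact aux_abs_le p hp (w x)

private lemma aux_jensen {X : Type*} [MeasurableSpace X] (μ : Measure X)
    [IsProbabilityMeasure μ] (p : ℝ) (hp : 1 ≤ p) (w : X → ℝ) (hw : Measurable w)
    (hwp : Integrable (fun x => |w x| ^ p) μ) :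
    |∫ x, w x ∂μ| ^ p ≤ ∫ x, |w x| ^ p ∂μ := by
  have hw1 : Integrable (fun x => |w x|) μ := (aux_integrable μ p hp w hw hwp).abs
  have hcont : ContinuousOn (fun x : ℝ => x ^ p) (Set.Ici 0) := fun x _ =>
    (Real.continuousAt_rpow_const x p (Or.inr (by linarith))).continuousWithinAt
  have key : (∫ x, |w x| ∂μ) ^ p ≤ ∫ x, |w x| ^ p ∂μ :=
    (convexOn_rpow hp).map_integral_le hcont isClosed_Ici
      (Filter.Eventually.of_forall fun x => Set.mem_Ici.2 (abs_nonneg _)) hw1 hwp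
  have habs : |∫ x, w x ∂μ| ≤ ∫ x, |w x| ∂μ := by
    simpa [Real.norm_eq_abs] using norm_integral_le_integral_norm (μ := μ) w
  exact le_trans (Real.rpow_le_rpow (abs_nonneg _) habs (by linarith)) key

private lemma aux_two_pow (p : ℝ) (hp : 1 ≤ p) {a b : ℝ} (ha : 0 ≤ a) (hb : 0 ≤ b) :
    (a + b) ^ p ≤ 2 ^ (p - 1) * (a ^ p + b ^ p) := by
  have := NNReal.rpow_add_le_mul_rpow_add_rpow a.toNNReal b.toNNReal hp
  have h := NNReal.coe_le_coe.2 this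
  push_cast at h
  rwa [Real.coe_toNNReal a ha, Real.coe_toNNReal b hb] at h

/-- On a probability space, `∫ |f ∫g − g ∫f|^p ≤ 2^p (∫|f|^p)(∫|g−f|^p)` for `p ≥ 1`. -/
theorem stmt_4 {X : Type*} [MeasurableSpace X] (μ : Measure X) [IsProbabilityMeasure μ]
    (p : ℝ) (hp : 1 ≤ p) (f g : X → ℝ) (hf : Measurable f) (hg : Measurable g)
    (hfp : Integrable (fun x => |f x| ^ p) μ)
    (hgfp : Integrable (fun x => |g x - f x| ^ p) μ) :
    (∫ x, |f x * (∫ y, g y ∂μ) - g x * (∫ y, f y ∂μ)| ^ p ∂μ) ≤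
      2 ^ p * (∫ x, |f x| ^ p ∂μ) * (∫ x, |g x - f x| ^ p ∂μ) := by
  set A := ∫ y, f y ∂μ with hA'
  set B := ∫ y, (g y - f y) ∂μ with hB'
  set F := ∫ x, |f x| ^ p ∂μ with hF'
  set G := ∫ x, |g x - f x| ^ p ∂μ with hG'
  have hfi : Integrable f μ := aux_integrable μ p hp f hf hfp
  have hhi : Integrable (fun x => g x - f x) μ := aux_integrable μ p hp _ (hg.sub hf) hgfp
  have hInt : (∫ y, g y ∂μ) = A + B := by
    rw [hA', hB', ← integral_add hfi hhi]
    exact integral_congr_ae (Filter.Eventually.of_forall fun y => by ring)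
  have hpt : ∀ x, |f x * (∫ y, g y ∂μ) - g x * A| ^ p ≤
      2 ^ (p - 1) * (|f x| ^ p * |B| ^ p + |g x - f x| ^ p * |A| ^ p) := by
    intro x
    have h1 : f x * (∫ y, g y ∂μ) - g x * A = f x * B - (g x - f x) * A := by
      rw [hInt]; ring
    rw [h1]
    have h2 : |f x * B - (g x - f x) * A| ≤ |f x| * |B| + |g x - f x| * |A| := by
      calc |f x * B - (g x - f x) * A| ≤ |f x * B| + |(g x - f x) * A| := abs_sub _ _
        _ = |f x| * |B| + |g x - f x| * |A| := by rw [abs_mul, abs_mul]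
    calc |f x * B - (g x - f x) * A| ^ p
        ≤ (|f x| * |B| + |g x - f x| * |A|) ^ p :=
          Real.rpow_le_rpow (abs_nonneg _) h2 (by linarith)
      _ ≤ 2 ^ (p - 1) * ((|f x| * |B|) ^ p + (|g x - f x| * |A|) ^ p) :=
          aux_two_pow p hp (mul_nonneg (abs_nonneg _) (abs_nonneg _))
            (mul_nonneg (abs_nonneg _) (abs_nonneg _))
      _ = 2 ^ (p - 1) * (|f x| ^ p * |B| ^ p + |g x - f x| ^ p * |A| ^ p) := by
          rw [Real.mul_rpow (abs_nonneg _) (abs_nonneg _),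
            Real.mul_rpow (abs_nonneg _) (abs_nonneg _)]
  have hRHSint : Integrable
      (fun x => 2 ^ (p - 1) * (|f x| ^ p * |B| ^ p + |g x - f x| ^ p * |A| ^ p)) μ :=
    ((hfp.mul_const _).add (hgfp.mul_const _)).const_mul _
  have step1 : (∫ x, |f x * (∫ y, g y ∂μ) - g x * A| ^ p ∂μ) ≤
      ∫ x, 2 ^ (p - 1) * (|f x| ^ p * |B| ^ p + |g x - f x| ^ p * |A| ^ p) ∂μ :=
    integral_mono_of_nonneg
      (Filter.Eventually.of_forall fun x => Real.rpow_nonneg (abs_nonneg _) p)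
      hRHSint (Filter.Eventually.of_forall hpt)
  have step2 : (∫ x, 2 ^ (p - 1) * (|f x| ^ p * |B| ^ p + |g x - f x| ^ p * |A| ^ p) ∂μ)
      = 2 ^ (p - 1) * (F * |B| ^ p + G * |A| ^ p) := by
    rw [integral_const_mul, integral_add (hfp.mul_const _) (hgfp.mul_const _),
      integral_mul_const, integral_mul_const]
  have hBle : |B| ^ p ≤ G := aux_jensen μ p hp _ (hg.sub hf) hgfp
  have hAle : |A| ^ p ≤ F := aux_jensen μ p hp _ hf hfp
  have hF0 : 0 ≤ F := integral_nonneg fun x => Real.rpow_nonneg (abs_nonneg _) p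
  have hG0 : 0 ≤ G := integral_nonneg fun x => Real.rpow_nonneg (abs_nonneg _) p
  have h2p : (2:ℝ) ^ (p - 1) * 2 = 2 ^ p := by
    rw [Real.rpow_sub (by norm_num : (0:ℝ) < 2), Real.rpow_one]; ring
  have step3 : 2 ^ (p - 1) * (F * |B| ^ p + G * |A| ^ p) ≤ 2 ^ p * F * G := by
    have h1 : F * |B| ^ p + G * |A| ^ p ≤ F * G + G * F :=
      add_le_add (mul_le_mul_of_nonneg_left hBle hF0) (mul_le_mul_of_nonneg_left hAle hG0)
    have h2 : (0:ℝ) ≤ 2 ^ (p - 1) := Real.rpow_nonneg (by norm_num) _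
    calc 2 ^ (p - 1) * (F * |B| ^ p + G * |A| ^ p)
        ≤ 2 ^ (p - 1) * (F * G + G * F) := mul_le_mul_of_nonneg_left h1 h2
      _ = 2 ^ p * F * G := by rw [← h2p]; ring
  exact le_trans (le_trans step1 (le_of_eq step2)) step3
end

section
/- Let (X, μ) be a probability space, let p ≥ 1, q > 1, R > 0 and M_h > 0 be real, and let h : X → [0, M_h] be measurable with ∫_X h^{1/q} dμ > 0. Then there exists a constant C > 0, depending only on p, q, R, M_h and ∫_X h^{1/q} dμ, such that for all measurable functions u, ũ : X → ℝ with |u| ≤ R and |ũ| ≤ R almost everywhere, one has ( ∫_X | h e^{u}/∫_X h e^{u} dμ − h e^{ũ}/∫_X h e^{ũ} dμ |^p dμ )^{1/p} ≤ C ( ∫_X |u − ũ|^p dμ )^{1/p}. -/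
open MeasureTheory Real
open scoped ENNReal

/-!
Write `Z(w) = ∫ h e^w`. For `|w| ≤ R` one has `Z(w) ≥ e^{-R} ∫ h > 0`, and `exp` is
`e^R`-Lipschitz on `[-R, R]`. Splitting `h e^u / Z(u) - h e^v / Z(v)` into
`h (e^u - e^v) / Z(u) + h e^v (Z(v) - Z(u)) / (Z(u) Z(v))` gives the pointwise bound
`κ |u - v| + κ² ‖u - v‖₁` with `κ = M e^{2R} / ∫ h`. Minkowski's inequality and
`‖·‖₁ ≤ ‖·‖_p` on a probability space then give the `L^p` estimate with `C = κ + κ²`.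
-/

lemma abs_exp_sub_exp_le {R a b : ℝ} (ha : |a| ≤ R) (hb : |b| ≤ R) :
    |exp a - exp b| ≤ exp R * |a - b| := by
  wlog hba : b ≤ a generalizing a b
  · rw [abs_sub_comm, abs_sub_comm a]
    exact this hb ha (le_of_not_ge hba)
  rw [abs_of_nonneg (sub_nonneg.2 (exp_le_exp.2 hba)), abs_of_nonneg (sub_nonneg.2 hba)]
  calc exp a - exp b = exp a * (1 - exp (b - a)) := by rw [exp_sub]; field_simp
    _ ≤ exp a * (a - b) :=
        mul_le_mul_of_nonneg_left (by linarith [add_one_le_exp (b - a)]) (exp_pos a).le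
    _ ≤ exp R * (a - b) :=
        mul_le_mul_of_nonneg_right (exp_le_exp.2 ((le_abs_self a).trans ha)) (sub_nonneg.2 hba)

lemma abs_mul_exp_div_sub_mul_exp_div_le {H M R a b Za Zb m : ℝ} (hH : 0 ≤ H) (hHM : H ≤ M)
    (ha : |a| ≤ R) (hb : |b| ≤ R) (hm : 0 < m) (hZa : m ≤ Za) (hZb : m ≤ Zb) :
    |H * exp a / Za - H * exp b / Zb| ≤
      M * exp R / m * |a - b| + M * exp R / m ^ 2 * |Za - Zb| := by
  have hZa0 : 0 < Za := hm.trans_le hZa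
  have hZb0 : 0 < Zb := hm.trans_le hZb
  calc |H * exp a / Za - H * exp b / Zb|
      = |H * (exp a - exp b) / Za + H * exp b * (Zb - Za) / (Za * Zb)| := by
        congr 1; field_simp; ring
    _ ≤ |H * (exp a - exp b) / Za| + |H * exp b * (Zb - Za) / (Za * Zb)| := abs_add_le _ _
    _ = H * |exp a - exp b| / Za + H * exp b * |Za - Zb| / (Za * Zb) := by
        rw [abs_div, abs_div, abs_mul, abs_mul, abs_mul, abs_of_nonneg hH, abs_of_pos (exp_pos b),
          abs_of_pos hZa0, abs_of_pos (mul_pos hZa0 hZb0), abs_sub_comm Zb]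
    _ ≤ M * (exp R * |a - b|) / m + M * exp R * |Za - Zb| / (m * m) := by
        have hM : 0 ≤ M := hH.trans hHM
        have hbR : exp b ≤ exp R := exp_le_exp.2 ((le_abs_self b).trans hb)
        have hexp := abs_exp_sub_exp_le ha hb
        have hZ : m * m ≤ Za * Zb := mul_le_mul hZa hZb hm.le hZa0.le
        apply add_le_add <;> gcongr
    _ = M * exp R / m * |a - b| + M * exp R / m ^ 2 * |Za - Zb| := by ring

section Lp

variable {X : Type*} [MeasurableSpace X] {μ : Measure X}

lemma eLpNorm_le_mul_add_of_ae_norm_le [IsProbabilityMeasure μ] {E F : Type*}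
    [NormedAddCommGroup E] [NormedAddCommGroup F] {f : X → E} {g : X → F} {a b : ℝ}
    {p : ℝ≥0∞} (hp : 1 ≤ p) (hg : AEStronglyMeasurable g μ) (ha : 0 ≤ a) (hb : 0 ≤ b)
    (hfg : ∀ᵐ x ∂μ, ‖f x‖ ≤ a * ‖g x‖ + b) :
    eLpNorm f p μ ≤ ENNReal.ofReal a * eLpNorm g p μ + ENNReal.ofReal b := by
  calc eLpNorm f p μ ≤ eLpNorm (fun x => a * ‖g x‖ + b) p μ := eLpNorm_mono_ae_real hfg
    _ ≤ eLpNorm (a • fun x => ‖g x‖) p μ + eLpNorm (fun _ => b) p μ :=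
        eLpNorm_add_le (hg.norm.const_smul a) aestronglyMeasurable_const hp
    _ = ENNReal.ofReal a * eLpNorm g p μ + ENNReal.ofReal b := by
        rw [eLpNorm_const_smul, eLpNorm_norm, eLpNorm_const _ (by positivity) (NeZero.ne μ)]
        simp [Real.enorm_of_nonneg ha, Real.enorm_of_nonneg hb]

lemma MemLp.toReal_eLpNorm_eq_integral_abs_rpow {f : X → ℝ} {p : ℝ} (hp : 0 < p)
    (hf : MemLp f (ENNReal.ofReal p) μ) :
    (eLpNorm f (ENNReal.ofReal p) μ).toReal = (∫ x, |f x| ^ p ∂μ) ^ (1 / p) := by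
  rw [hf.eLpNorm_eq_integral_rpow_norm (by simpa using hp) ENNReal.ofReal_ne_top,
    ENNReal.toReal_ofReal hp.le, ENNReal.toReal_ofReal (by positivity), one_div]
  rfl

lemma integral_abs_rpow_rpow_le_of_eLpNorm_le {f g : X → ℝ} {p C : ℝ} (hp : 0 < p) (hC : 0 ≤ C)
    (hf : AEStronglyMeasurable f μ) (hg : MemLp g (ENNReal.ofReal p) μ)
    (hfg : eLpNorm f (ENNReal.ofReal p) μ ≤ ENNReal.ofReal C * eLpNorm g (ENNReal.ofReal p) μ) :
    (∫ x, |f x| ^ p ∂μ) ^ (1 / p) ≤ C * (∫ x, |g x| ^ p ∂μ) ^ (1 / p) := by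
  have hbound : ENNReal.ofReal C * eLpNorm g (ENNReal.ofReal p) μ ≠ ∞ :=
    ENNReal.mul_ne_top ENNReal.ofReal_ne_top hg.eLpNorm_ne_top
  have hf' : MemLp f (ENNReal.ofReal p) μ := ⟨hf, hfg.trans_lt hbound.lt_top⟩
  rw [← MemLp.toReal_eLpNorm_eq_integral_abs_rpow hp hf',
    ← MemLp.toReal_eLpNorm_eq_integral_abs_rpow hp hg,
    ← ENNReal.toReal_ofReal hC, ← ENNReal.toReal_mul]
  exact ENNReal.toReal_mono hbound hfg

end Lp

noncomputable def tiltedDensity {X : Type*} [MeasurableSpace X] (μ : Measure X) (h u : X → ℝ)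
    (x : X) : ℝ :=
  h x * exp (u x) / ∫ y, h y * exp (u y) ∂μ

section Tilt

variable {X : Type*} [MeasurableSpace X] {μ : Measure X} {h u v : X → ℝ} {M R : ℝ}

lemma integrable_mul_exp (hh : Integrable h μ) (hu : AEStronglyMeasurable u μ)
    (huR : ∀ᵐ x ∂μ, |u x| ≤ R) : Integrable (fun x => h x * exp (u x)) μ :=
  hh.mul_bdd hu.aemeasurable.exp.aestronglyMeasurable <| by
    filter_upwards [huR] with x hx
    rw [Real.norm_of_nonneg (exp_pos _).le]
    exact exp_le_exp.2 ((le_abs_self _).trans hx)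

lemma exp_neg_mul_integral_le_integral_mul_exp (hh : Integrable h μ) (hh0 : ∀ x, 0 ≤ h x)
    (hu : AEStronglyMeasurable u μ) (huR : ∀ᵐ x ∂μ, |u x| ≤ R) :
    exp (-R) * ∫ x, h x ∂μ ≤ ∫ x, h x * exp (u x) ∂μ := by
  rw [← integral_const_mul]
  refine integral_mono_ae (hh.const_mul _) (integrable_mul_exp hh hu huR) ?_
  filter_upwards [huR] with x hx
  rw [mul_comm]
  exact mul_le_mul_of_nonneg_left (exp_le_exp.2 (neg_le_of_abs_le hx)) (hh0 x)

lemma enorm_integral_mul_exp_sub_le (hh : Integrable h μ) (hh0 : ∀ x, 0 ≤ h x)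
    (hhM : ∀ x, h x ≤ M) (hM : 0 ≤ M) (hu : AEStronglyMeasurable u μ) (huR : ∀ᵐ x ∂μ, |u x| ≤ R)
    (hv : AEStronglyMeasurable v μ) (hvR : ∀ᵐ x ∂μ, |v x| ≤ R) :
    ‖∫ x, h x * exp (u x) ∂μ - ∫ x, h x * exp (v x) ∂μ‖ₑ ≤
      ENNReal.ofReal (M * exp R) * eLpNorm (u - v) 1 μ := by
  rw [← integral_sub (integrable_mul_exp hh hu huR) (integrable_mul_exp hh hv hvR)]
  calc ‖∫ x, (h x * exp (u x) - h x * exp (v x)) ∂μ‖ₑ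
      ≤ eLpNorm (fun x => h x * exp (u x) - h x * exp (v x)) 1 μ := by
        rw [eLpNorm_one_eq_lintegral_enorm]
        exact enorm_integral_le_lintegral_enorm _
    _ ≤ eLpNorm ((M * exp R) • (u - v)) 1 μ := by
        refine eLpNorm_mono_ae ?_
        filter_upwards [huR, hvR] with x hux hvx
        simp only [Real.norm_eq_abs, Pi.smul_apply, Pi.sub_apply, smul_eq_mul, ← mul_sub,
          abs_mul, abs_of_nonneg (hh0 x), abs_of_nonneg hM, abs_exp, mul_assoc]
        exact mul_le_mul (hhM x) (abs_exp_sub_exp_le hux hvx) (abs_nonneg _) hM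
    _ = ENNReal.ofReal (M * exp R) * eLpNorm (u - v) 1 μ := by
        rw [eLpNorm_const_smul, Real.enorm_of_nonneg (mul_nonneg hM (exp_pos R).le)]

theorem eLpNorm_tiltedDensity_sub_le [IsProbabilityMeasure μ] {p : ℝ≥0∞} (hp : 1 ≤ p)
    (hh : AEStronglyMeasurable h μ) (hh0 : ∀ x, 0 ≤ h x) (hhM : ∀ x, h x ≤ M) (hM : 0 ≤ M)
    (hI : 0 < ∫ x, h x ∂μ) (hu : AEStronglyMeasurable u μ) (huR : ∀ᵐ x ∂μ, |u x| ≤ R)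
    (hv : AEStronglyMeasurable v μ) (hvR : ∀ᵐ x ∂μ, |v x| ≤ R) :
    eLpNorm (tiltedDensity μ h u - tiltedDensity μ h v) p μ ≤
      ENNReal.ofReal (M * exp (2 * R) / (∫ x, h x ∂μ) + (M * exp (2 * R) / ∫ x, h x ∂μ) ^ 2) *
        eLpNorm (u - v) p μ := by
  have hhint : Integrable h μ :=
    .of_bound hh M (ae_of_all _ fun x => by rw [Real.norm_of_nonneg (hh0 x)]; exact hhM x)
  set I := ∫ x, h x ∂μ
  set Zu := ∫ x, h x * exp (u x) ∂μ
  set Zv := ∫ x, h x * exp (v x) ∂μ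
  have hm : 0 < exp (-R) * I := by positivity
  have hZ : ENNReal.ofReal |Zu - Zv| ≤ ENNReal.ofReal (M * exp R) * eLpNorm (u - v) p μ := by
    rw [← Real.enorm_eq_ofReal_abs]
    refine (enorm_integral_mul_exp_sub_le hhint hh0 hhM hM hu huR hv hvR).trans ?_
    gcongr
    exact eLpNorm_le_eLpNorm_of_exponent_le hp (hu.sub hv)
  have hpt : ∀ᵐ x ∂μ, ‖(tiltedDensity μ h u - tiltedDensity μ h v) x‖ ≤
      M * exp R / (exp (-R) * I) * ‖(u - v) x‖ + M * exp R / (exp (-R) * I) ^ 2 * |Zu - Zv| := by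
    filter_upwards [huR, hvR] with x hux hvx
    exact abs_mul_exp_div_sub_mul_exp_div_le (hh0 x) (hhM x) hux hvx hm
      (exp_neg_mul_integral_le_integral_mul_exp hhint hh0 hu huR)
      (exp_neg_mul_integral_le_integral_mul_exp hhint hh0 hv hvR)
  have hκ : M * exp R / (exp (-R) * I) = M * exp (2 * R) / I := by
    rw [exp_neg, two_mul, exp_add]
    field_simp
  calc eLpNorm (tiltedDensity μ h u - tiltedDensity μ h v) p μ
      ≤ ENNReal.ofReal (M * exp R / (exp (-R) * I)) * eLpNorm (u - v) p μ +
          ENNReal.ofReal (M * exp R / (exp (-R) * I) ^ 2 * |Zu - Zv|) :=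
        eLpNorm_le_mul_add_of_ae_norm_le hp (hu.sub hv) (by positivity) (by positivity) hpt
    _ ≤ ENNReal.ofReal (M * exp R / (exp (-R) * I)) * eLpNorm (u - v) p μ +
          ENNReal.ofReal (M * exp R / (exp (-R) * I) ^ 2) *
            (ENNReal.ofReal (M * exp R) * eLpNorm (u - v) p μ) := by
        rw [ENNReal.ofReal_mul (by positivity)]
        gcongr
    _ = _ := by
        rw [← mul_assoc, ← ENNReal.ofReal_mul (by positivity), ← add_mul,
          ← ENNReal.ofReal_add (by positivity) (by positivity), hκ]
        congr 2
        rw [← hκ]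
        field_simp

end Tilt

lemma integral_pos_of_integral_rpow_pos {X : Type*} [MeasurableSpace X] {μ : Measure X}
    {f : X → ℝ} {r : ℝ} (hr : r ≠ 0) (hf0 : ∀ x, 0 ≤ f x) (hf : Integrable f μ)
    (hpos : 0 < ∫ x, f x ^ r ∂μ) : 0 < ∫ x, f x ∂μ := by
  refine (integral_nonneg hf0).lt_of_ne fun hzero => hpos.ne' ?_
  have hf_ae : f =ᵐ[μ] 0 := (integral_eq_zero_iff_of_nonneg hf0 hf).1 hzero.symm
  refine integral_eq_zero_of_ae ?_
  filter_upwards [hf_ae] with x hx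
  simp [hx, zero_rpow hr]

theorem stmt_5_general {X : Type*} [MeasurableSpace X] (μ : Measure X) [IsProbabilityMeasure μ]
    (p q R Mh : ℝ) (hp : 1 ≤ p) (hq : 1 < q) (hMh : 0 < Mh)
    (h : X → ℝ) (hhm : Measurable h) (hh0 : ∀ x, 0 ≤ h x) (hhM : ∀ x, h x ≤ Mh)
    (hhpos : 0 < ∫ x, h x ^ (1 / q) ∂μ) :
    ∃ C : ℝ, 0 < C ∧
      ∀ u v : X → ℝ, Measurable u → Measurable v →
        (∀ᵐ x ∂μ, |u x| ≤ R) → (∀ᵐ x ∂μ, |v x| ≤ R) →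
        (∫ x, |h x * Real.exp (u x) / (∫ y, h y * Real.exp (u y) ∂μ) -
            h x * Real.exp (v x) / (∫ y, h y * Real.exp (v y) ∂μ)| ^ p ∂μ) ^ (1 / p) ≤
          C * (∫ x, |u x - v x| ^ p ∂μ) ^ (1 / p) := by
  have hhint : Integrable h μ :=
    .of_bound hhm.aestronglyMeasurable Mh
      (ae_of_all _ fun x => by rw [Real.norm_of_nonneg (hh0 x)]; exact hhM x)
  have hI : 0 < ∫ x, h x ∂μ :=
    integral_pos_of_integral_rpow_pos (one_div_ne_zero (by linarith)) hh0 hhint hhpos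
  refine ⟨Mh * exp (2 * R) / (∫ x, h x ∂μ) + (Mh * exp (2 * R) / ∫ x, h x ∂μ) ^ 2,
    by positivity, fun u v hum hvm huR hvR => ?_⟩
  have huv : MemLp (u - v) (ENNReal.ofReal p) μ :=
    .of_bound (hum.sub hvm).aestronglyMeasurable (R + R) <| by
      filter_upwards [huR, hvR] with x hux hvx
      exact (abs_sub _ _).trans (add_le_add hux hvx)
  have hdiff : Measurable (tiltedDensity μ h u - tiltedDensity μ h v) := by
    unfold tiltedDensity; fun_prop
  exact integral_abs_rpow_rpow_le_of_eLpNorm_le (by linarith) (by positivity)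
    hdiff.aestronglyMeasurable huv <|
    eLpNorm_tiltedDensity_sub_le (ENNReal.one_le_ofReal.2 hp) hhm.aestronglyMeasurable hh0 hhM
      hMh.le hI hum.aestronglyMeasurable huR hvm.aestronglyMeasurable hvR

/-- L^p-Lipschitz continuity of the normalized nonlinearity `v ↦ h e^v / ∫ h e^v` on
uniformly bounded functions, on a probability space. -/
theorem stmt_5 {X : Type*} [MeasurableSpace X] (μ : Measure X) [IsProbabilityMeasure μ]
    (p q R Mh : ℝ) (hp : 1 ≤ p) (hq : 1 < q) (hR : 0 < R) (hMh : 0 < Mh)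
    (h : X → ℝ) (hhm : Measurable h) (hh0 : ∀ x, 0 ≤ h x) (hhM : ∀ x, h x ≤ Mh)
    (hhpos : 0 < ∫ x, h x ^ (1 / q) ∂μ) :
    ∃ C : ℝ, 0 < C ∧
      ∀ u v : X → ℝ, Measurable u → Measurable v →
        (∀ᵐ x ∂μ, |u x| ≤ R) → (∀ᵐ x ∂μ, |v x| ≤ R) →
        (∫ x, |h x * Real.exp (u x) / (∫ y, h y * Real.exp (u y) ∂μ) -
            h x * Real.exp (v x) / (∫ y, h y * Real.exp (v y) ∂μ)| ^ p ∂μ) ^ (1 / p) ≤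
          C * (∫ x, |u x - v x| ^ p ∂μ) ^ (1 / p) :=
  stmt_5_general μ p q R Mh hp hq hMh h hhm hh0 hhM hhpos
end

section
/- Let (M, d) be a compact metric space equipped with a Borel probability measure μ, let T > 0, α ∈ (0,1], n a positive integer, q > 1, and let (a_{ij}) be a real n×n matrix. For each j = 1,…,n let h_j : M → ℝ satisfy 0 ≤ h_j ≤ M_j, |h_j(x) − h_j(y)| ≤ L d(x,y)^α for all x,y ∈ M, and ∫_M h_j^{1/q} dμ > 0; and let u_j : M × [0,T] → ℝ satisfy |u_j| ≤ R and |u_j(x,t) − u_j(y,s)| ≤ L ( d(x,y)^α + |t−s|^{α/2} ) for all x,y ∈ M and t,s ∈ [0,T]. Define f_i(x,t) = ∑_{j=1}^{n} a_{ij} ( h_j(x) e^{u_j(x,t)} / ∫_M h_j e^{u_j(·,t)} dμ − 1 ). Then for each i there exists a constant C > 0, depending only on n, (a_{ij}), q, α, L, R and the numbers M_j and ∫_M h_j^{1/q} dμ, such that |f_i(x,t) − f_i(y,s)| ≤ C ( d(x,y)^α + |t−s|^{α/2} ) for all x,y ∈ M and t,s ∈ [0,T]. -/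
/-!
Write `f_i = ∑ⱼ a_{ij} (Nⱼ / Zⱼ - 1)` with `Nⱼ = hⱼ e^{uⱼ}` and `Zⱼ(t) = ∫ Nⱼ(·, t) dμ`.
Since `|uⱼ| ≤ R`, the exponential is `e^R`-Lipschitz on the relevant range, so `Nⱼ` is in
`C^{α,α/2}`; integrating in space keeps the time modulus, so `Zⱼ` is too. Moreover
`e^{-R} ∫ hⱼ ≤ Zⱼ ≤ Mⱼ e^R`, where `∫ hⱼ > 0` because `∫ hⱼ^{1/q} > 0`, and a quotient of
`C^{α,α/2}` functions whose denominator stays away from `0` is again in `C^{α,α/2}`.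
-/

open MeasureTheory Real Filter Topology

lemma abs_exp_sub_exp_le_of_le {v w R : ℝ} (hv : v ≤ R) (hw : w ≤ R) :
    |exp v - exp w| ≤ exp R * |v - w| := by
  wlog hwv : w ≤ v generalizing v w
  · rw [abs_sub_comm, abs_sub_comm v]
    exact this hw hv (le_of_not_ge hwv)
  rw [abs_of_nonneg (sub_nonneg.2 (exp_le_exp.2 hwv)), abs_of_nonneg (sub_nonneg.2 hwv)]
  have hexp : exp w = exp v * exp (w - v) := by rw [← exp_add]; ring_nf
  calc exp v - exp w = exp v * (1 - exp (w - v)) := by rw [hexp]; ring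
    _ ≤ exp v * (v - w) :=
        mul_le_mul_of_nonneg_left (by linarith [add_one_le_exp (w - v)]) (exp_pos v).le
    _ ≤ exp R * (v - w) := by gcongr

lemma abs_mul_exp_sub_mul_exp_le {a b v w B R : ℝ} (hb : 0 ≤ b) (hbB : b ≤ B)
    (hv : v ≤ R) (hw : w ≤ R) :
    |a * exp v - b * exp w| ≤ exp R * (|a - b| + B * |v - w|) := by
  calc |a * exp v - b * exp w| = |(a - b) * exp v + b * (exp v - exp w)| := by ring_nf
    _ ≤ |a - b| * exp v + b * |exp v - exp w| := by
        refine (abs_add_le _ _).trans_eq ?_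
        rw [abs_mul, abs_mul, abs_of_pos (exp_pos v), abs_of_nonneg hb]
    _ ≤ |a - b| * exp R + B * (exp R * |v - w|) := by
        have hB : 0 ≤ B := hb.trans hbB
        gcongr
        exact abs_exp_sub_exp_le_of_le hv hw
    _ = exp R * (|a - b| + B * |v - w|) := by ring

lemma abs_div_sub_div_le_of_le {a b c d m G δ : ℝ} (hm : 0 < m) (hc : m ≤ c) (hd : m ≤ d)
    (hdG : d ≤ G) (hb : 0 ≤ b) (hbG : b ≤ G) (hab : |a - b| ≤ δ) (hcd : |c - d| ≤ δ) :
    |a / c - b / d| ≤ 2 * G * δ / m ^ 2 := by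
  have hc0 : 0 < c := hm.trans_le hc
  have hd0 : 0 < d := hm.trans_le hd
  have hG : 0 ≤ G := hb.trans hbG
  have hδ : 0 ≤ δ := (abs_nonneg _).trans hab
  have hnum : |a * d - c * b| ≤ 2 * G * δ :=
    calc |a * d - c * b| = |(a - b) * d + b * (d - c)| := by ring_nf
      _ ≤ |a - b| * d + b * |c - d| := by
          refine (abs_add_le _ _).trans_eq ?_
          rw [abs_mul, abs_mul, abs_of_pos hd0, abs_of_nonneg hb, abs_sub_comm d]
      _ ≤ δ * G + G * δ := by gcongr
      _ = 2 * G * δ := by ring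
  rw [div_sub_div _ _ hc0.ne' hd0.ne', abs_div, abs_of_pos (mul_pos hc0 hd0), sq]
  exact div_le_div₀ ((abs_nonneg _).trans hnum) hnum (mul_pos hm hm) (mul_le_mul hc hd hm.le hc0.le)

lemma continuous_of_abs_sub_le_mul_rpow {X : Type*} [PseudoMetricSpace X] {g : X → ℝ}
    {L α : ℝ} (hα : 0 < α) (hg : ∀ x y, |g x - g y| ≤ L * dist x y ^ α) : Continuous g := by
  refine continuous_iff_continuousAt.2 fun x => tendsto_iff_dist_tendsto_zero.2 ?_
  have hlim : Tendsto (fun y => L * dist y x ^ α) (𝓝 x) (𝓝 (L * dist x x ^ α)) :=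
    (((continuous_id.dist continuous_const).rpow_const fun _ => Or.inr hα.le).const_mul L).tendsto x
  rw [dist_self, zero_rpow hα.ne', mul_zero] at hlim
  exact squeeze_zero (fun _ => dist_nonneg) (fun y => hg y x) hlim

lemma integral_pos_of_integral_rpow_pos_s6 {X : Type*} [MeasurableSpace X] {μ : Measure X}
    {g : X → ℝ} (hg0 : 0 ≤ g) (hg : Integrable g μ) {p : ℝ} (hp : p ≠ 0)
    (hpos : 0 < ∫ x, g x ^ p ∂μ) : 0 < ∫ x, g x ∂μ := by
  rw [integral_pos_iff_support_of_nonneg (fun x => rpow_nonneg (hg0 x) p)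
    (Integrable.of_integral_ne_zero hpos.ne')] at hpos
  rw [integral_pos_iff_support_of_nonneg hg0 hg]
  refine hpos.trans_le (measure_mono fun x hx hgx => hx ?_)
  simp [hgx, zero_rpow hp]

section ParabolicHolder

variable {X : Type*} [PseudoMetricSpace X]

/-- `w` is in the parabolic Hölder class `C^{α,α/2}` on `X × S`, with constant `C`. -/
def ParabolicHolderOnWith (C α : ℝ) (w : X → ℝ → ℝ) (S : Set ℝ) : Prop :=
  ∀ x y s t, s ∈ S → t ∈ S → |w x t - w y s| ≤ C * (dist x y ^ α + |t - s| ^ (α / 2))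

variable {C α : ℝ} {w : X → ℝ → ℝ} {S : Set ℝ}

lemma parabolicHolderOnWith_of_holder {g : X → ℝ} {L : ℝ} (hL : 0 ≤ L)
    (hg : ∀ x y, |g x - g y| ≤ L * dist x y ^ α) :
    ParabolicHolderOnWith L α (fun x _ => g x) S := fun x y s t _ _ =>
  (hg x y).trans (by gcongr; exact le_add_of_nonneg_right (by positivity))

namespace ParabolicHolderOnWith

lemma mono {C' : ℝ} (hw : ParabolicHolderOnWith C α w S) (hC : C ≤ C') :
    ParabolicHolderOnWith C' α w S := fun x y s t hs ht =>
  (hw x y s t hs ht).trans (by gcongr)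

lemma const_nonneg (hw : ParabolicHolderOnWith C α w S) (x : X) {s t : ℝ} (hs : s ∈ S)
    (ht : t ∈ S) (hst : s ≠ t) : 0 ≤ C := by
  refine nonneg_of_mul_nonneg_left ((abs_nonneg _).trans (hw x x s t hs ht)) ?_
  have : 0 < |t - s| := abs_pos.2 (sub_ne_zero.2 hst.symm)
  positivity

lemma continuous_slice (hw : ParabolicHolderOnWith C α w S) (hα : 0 < α) {t : ℝ}
    (ht : t ∈ S) : Continuous (w · t) :=
  continuous_of_abs_sub_le_mul_rpow hα fun x y => by
    simpa [zero_rpow (half_pos hα).ne'] using hw x y t t ht ht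

lemma mul_exp {g u : X → ℝ → ℝ} {Cg Cu B R : ℝ} (hg : ParabolicHolderOnWith Cg α g S)
    (hu : ParabolicHolderOnWith Cu α u S) (hg0 : ∀ x t, t ∈ S → 0 ≤ g x t)
    (hgB : ∀ x t, t ∈ S → g x t ≤ B) (huR : ∀ x t, t ∈ S → u x t ≤ R) :
    ParabolicHolderOnWith (exp R * (Cg + B * Cu)) α (fun x t => g x t * exp (u x t)) S := by
  intro x y s t hs ht
  have hB : 0 ≤ B := (hg0 y s hs).trans (hgB y s hs)
  calc |g x t * exp (u x t) - g y s * exp (u y s)|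
      ≤ exp R * (|g x t - g y s| + B * |u x t - u y s|) :=
        abs_mul_exp_sub_mul_exp_le (hg0 y s hs) (hgB y s hs) (huR x t ht) (huR y s hs)
    _ ≤ exp R * (Cg * (dist x y ^ α + |t - s| ^ (α / 2)) +
          B * (Cu * (dist x y ^ α + |t - s| ^ (α / 2)))) := by
        gcongr
        exacts [hg x y s t hs ht, hu x y s t hs ht]
    _ = exp R * (Cg + B * Cu) * (dist x y ^ α + |t - s| ^ (α / 2)) := by ring

lemma div {N D : X → ℝ → ℝ} {K m G : ℝ} (hN : ParabolicHolderOnWith K α N S)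
    (hD : ParabolicHolderOnWith K α D S) (hm : 0 < m) (hDm : ∀ x t, t ∈ S → m ≤ D x t)
    (hDG : ∀ x t, t ∈ S → D x t ≤ G) (hN0 : ∀ x t, t ∈ S → 0 ≤ N x t)
    (hNG : ∀ x t, t ∈ S → N x t ≤ G) :
    ParabolicHolderOnWith (2 * K * G / m ^ 2) α (fun x t => N x t / D x t) S := by
  intro x y s t hs ht
  calc |N x t / D x t - N y s / D y s|
      ≤ 2 * G * (K * (dist x y ^ α + |t - s| ^ (α / 2))) / m ^ 2 :=
        abs_div_sub_div_le_of_le hm (hDm x t ht) (hDm y s hs) (hDG y s hs) (hN0 y s hs)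
          (hNG y s hs) (hN x y s t hs ht) (hD x y s t hs ht)
    _ = 2 * K * G / m ^ 2 * (dist x y ^ α + |t - s| ^ (α / 2)) := by ring

lemma sum_mul_sub_one {ι : Type*} [Fintype ι] {g : ι → X → ℝ → ℝ} {C : ι → ℝ} (c : ι → ℝ)
    (hg : ∀ j, ParabolicHolderOnWith (C j) α (g j) S) :
    ParabolicHolderOnWith (∑ j, |c j| * C j) α (fun x t => ∑ j, c j * (g j x t - 1)) S := by
  intro x y s t hs ht
  rw [← Finset.sum_sub_distrib, Finset.sum_mul]
  refine (Finset.abs_sum_le_sum_abs _ _).trans (Finset.sum_le_sum fun j _ => ?_)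
  rw [← mul_sub, abs_mul, mul_assoc, sub_sub_sub_cancel_right]
  exact mul_le_mul_of_nonneg_left (hg j x y s t hs ht) (abs_nonneg _)

variable [MeasurableSpace X] (μ : Measure X) [IsProbabilityMeasure μ]

lemma integral (hw : ParabolicHolderOnWith C α w S) (hα : 0 ≤ α) (hC : 0 ≤ C)
    (hint : ∀ t, t ∈ S → Integrable (w · t) μ) :
    ParabolicHolderOnWith C α (fun (_ : X) t => ∫ z, w z t ∂μ) S := by
  intro x y s t hs ht
  rw [← integral_sub (hint t ht) (hint s hs)]
  have hpt : ∀ z, ‖w z t - w z s‖ ≤ C * (dist x y ^ α + |t - s| ^ (α / 2)) := fun z =>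
    (hw z z s t hs ht).trans (by gcongr; rw [dist_self]; exact dist_nonneg)
  simpa using norm_integral_le_of_norm_le_const (μ := μ) (Eventually.of_forall hpt)

end ParabolicHolderOnWith

end ParabolicHolder

section NormalizedDensity

variable {X : Type*} [PseudoMetricSpace X] [CompactSpace X] [MeasurableSpace X]
  [OpensMeasurableSpace X] (μ : Measure X) [IsProbabilityMeasure μ]

lemma parabolicHolderOnWith_mul_exp_div_integral {h : X → ℝ} {u : X → ℝ → ℝ} {S : Set ℝ}
    {α B L R : ℝ} (hα : 0 < α) (hL : 0 ≤ L) (h0 : ∀ x, 0 ≤ h x) (hB : ∀ x, h x ≤ B)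
    (hHol : ∀ x y, |h x - h y| ≤ L * dist x y ^ α) (hI : 0 < ∫ x, h x ∂μ)
    (huR : ∀ x t, t ∈ S → |u x t| ≤ R) (hu : ParabolicHolderOnWith L α u S) :
    ParabolicHolderOnWith (2 * (exp R * (L + B * L)) * (B * exp R) / (exp (-R) * ∫ x, h x ∂μ) ^ 2)
      α (fun x t => h x * exp (u x t) / ∫ z, h z * exp (u z t) ∂μ) S := by
  obtain ⟨x₀⟩ := nonempty_of_isProbabilityMeasure μ
  have hB0 : 0 ≤ B := (h0 x₀).trans (hB x₀)
  have hN : ParabolicHolderOnWith (exp R * (L + B * L)) α (fun x t => h x * exp (u x t)) S :=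
    (parabolicHolderOnWith_of_holder hL hHol).mul_exp hu (fun x _ _ => h0 x) (fun x _ _ => hB x)
      fun x t ht => (abs_le.1 (huR x t ht)).2
  have hNB : ∀ x t, t ∈ S → h x * exp (u x t) ≤ B * exp R := fun x t ht =>
    mul_le_mul (hB x) (exp_le_exp.2 (abs_le.1 (huR x t ht)).2) (exp_pos _).le hB0
  have hint : ∀ t, t ∈ S → Integrable (fun z => h z * exp (u z t)) μ := fun t ht =>
    (hN.continuous_slice hα ht).integrable_of_hasCompactSupport
      (HasCompactSupport.of_compactSpace _)
  have hh : Integrable h μ :=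
    (continuous_of_abs_sub_le_mul_rpow hα hHol).integrable_of_hasCompactSupport
      (HasCompactSupport.of_compactSpace _)
  refine hN.div (hN.integral μ hα.le (by positivity) hint) (by positivity)
    (fun _ t ht => ?_) (fun _ t ht => ?_) (fun x _ _ => mul_nonneg (h0 x) (exp_pos _).le)
    hNB
  · rw [← integral_const_mul]
    refine integral_mono (hh.const_mul _) (hint t ht) fun x => ?_
    rw [mul_comm]
    exact mul_le_mul_of_nonneg_left (exp_le_exp.2 (abs_le.1 (huR x t ht)).1) (h0 x)
  · exact (integral_mono (hint t ht) (integrable_const _) fun x => hNB x t ht).trans_eq (by simp)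

end NormalizedDensity

theorem stmt_6_general {M : Type*} [MetricSpace M] [CompactSpace M] [MeasurableSpace M] [BorelSpace M]
    (μ : Measure M) [IsProbabilityMeasure μ]
    (T α : ℝ) (hT : 0 < T) (hα : α ∈ Set.Ioc (0 : ℝ) 1)
    (n : ℕ) (q : ℝ) (hq : 1 < q)
    (a : Matrix (Fin n) (Fin n) ℝ) (Mj : Fin n → ℝ) (L R : ℝ)
    (h : Fin n → M → ℝ)
    (hh0 : ∀ j x, 0 ≤ h j x) (hhM : ∀ j x, h j x ≤ Mj j)
    (hhHol : ∀ j x y, |h j x - h j y| ≤ L * dist x y ^ α)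
    (hhpos : ∀ j, 0 < ∫ x, h j x ^ (1 / q) ∂μ)
    (u : Fin n → M → ℝ → ℝ)
    (huR : ∀ j x t, t ∈ Set.Icc 0 T → |u j x t| ≤ R)
    (huHol : ∀ j x y s t, s ∈ Set.Icc 0 T → t ∈ Set.Icc 0 T →
      |u j x t - u j y s| ≤ L * (dist x y ^ α + |t - s| ^ (α / 2)))
    (f : Fin n → M → ℝ → ℝ)
    (hf : ∀ i x t, f i x t =
      ∑ j, a i j *
        (h j x * Real.exp (u j x t) / (∫ y, h j y * Real.exp (u j y t) ∂μ) - 1)) :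
    ∀ i, ∃ C : ℝ, 0 < C ∧
      ∀ x y : M, ∀ s t : ℝ, s ∈ Set.Icc 0 T → t ∈ Set.Icc 0 T →
        |f i x t - f i y s| ≤ C * (dist x y ^ α + |t - s| ^ (α / 2)) := by
  obtain ⟨hα0, -⟩ := hα
  intro i
  have hI : ∀ j, 0 < ∫ x, h j x ∂μ := fun j =>
    integral_pos_of_integral_rpow_pos_s6 (hh0 j)
      ((continuous_of_abs_sub_le_mul_rpow hα0 (hhHol j)).integrable_of_hasCompactSupport
        (HasCompactSupport.of_compactSpace _))
      (by positivity) (hhpos j)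
  refine ⟨max (∑ j, |a i j| * (2 * (exp R * (L + Mj j * L)) * (Mj j * exp R) /
    (exp (-R) * ∫ x, h j x ∂μ) ^ 2)) 1, lt_max_of_lt_right one_pos, fun x y s t hs ht => ?_⟩
  have hL : 0 ≤ L := ParabolicHolderOnWith.const_nonneg (huHol i) x (Set.left_mem_Icc.2 hT.le)
    (Set.right_mem_Icc.2 hT.le) hT.ne
  have hfi : f i = fun x t => ∑ j, a i j *
      (h j x * exp (u j x t) / (∫ y, h j y * exp (u j y t) ∂μ) - 1) :=
    funext₂ (hf i)
  rw [hfi]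
  exact ((ParabolicHolderOnWith.sum_mul_sub_one (a i) fun j =>
    parabolicHolderOnWith_mul_exp_div_integral μ hα0 hL (hh0 j) (hhM j) (hhHol j) (hI j)
      (huR j) (huHol j)).mono (le_max_left _ _)) x y s t hs ht

/-- If each `u_j` is in the parabolic Hölder class `C^{α,α/2}` and each `h_j` is
`α`-Hölder with `∫ h_j^{1/q} > 0`, then the nonlinearity
`f_i = ∑_j a_{ij}(h_j e^{u_j}/∫ h_j e^{u_j} − 1)` is in `C^{α,α/2}`. -/
theorem stmt_6 {M : Type*} [MetricSpace M] [CompactSpace M] [MeasurableSpace M] [BorelSpace M]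
    (μ : Measure M) [IsProbabilityMeasure μ]
    (T α : ℝ) (hT : 0 < T) (hα : α ∈ Set.Ioc (0 : ℝ) 1)
    (n : ℕ) (hn : 0 < n) (q : ℝ) (hq : 1 < q)
    (a : Matrix (Fin n) (Fin n) ℝ) (Mj : Fin n → ℝ) (L R : ℝ)
    (h : Fin n → M → ℝ)
    (hh0 : ∀ j x, 0 ≤ h j x) (hhM : ∀ j x, h j x ≤ Mj j)
    (hhHol : ∀ j x y, |h j x - h j y| ≤ L * dist x y ^ α)
    (hhpos : ∀ j, 0 < ∫ x, h j x ^ (1 / q) ∂μ)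
    (u : Fin n → M → ℝ → ℝ)
    (huR : ∀ j x t, t ∈ Set.Icc 0 T → |u j x t| ≤ R)
    (huHol : ∀ j x y s t, s ∈ Set.Icc 0 T → t ∈ Set.Icc 0 T →
      |u j x t - u j y s| ≤ L * (dist x y ^ α + |t - s| ^ (α / 2)))
    (f : Fin n → M → ℝ → ℝ)
    (hf : ∀ i x t, f i x t =
      ∑ j, a i j *
        (h j x * Real.exp (u j x t) / (∫ y, h j y * Real.exp (u j y t) ∂μ) - 1)) :
    ∀ i, ∃ C : ℝ, 0 < C ∧
      ∀ x y : M, ∀ s t : ℝ, s ∈ Set.Icc 0 T → t ∈ Set.Icc 0 T →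
        |f i x t - f i y s| ≤ C * (dist x y ^ α + |t - s| ^ (α / 2)) :=
  stmt_6_general μ T α hT hα n q hq a Mj L R h hh0 hhM hhHol hhpos u huR huHol f hf
end

section
/- There exists a constant C_S > 0 with the following property. For every r > 0, every continuously differentiable function v : ℝ² → ℝ, and every continuously differentiable function φ : ℝ² → ℝ whose support is compact and contained in the open ball B(0,2r), with 0 ≤ φ ≤ 1 and |∇φ(x)| ≤ 2/r for all x, one has ( ∫_{ℝ²} v⁴ φ⁴ dx )^{1/2} ≤ 2 C_S ( ( ∫_{ℝ²} v² φ² dx )^{1/2} ( ∫_{ℝ²} |∇v|² φ² dx )^{1/2} + (2/r) ∫_{B(0,2r)} v² dx ). -/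
open MeasureTheory Real Module

/-!
Apply the two-dimensional Gagliardo–Nirenberg inequality `‖u‖₂ ≤ C ‖∇u‖₁` to `u = v²φ²`, whose
gradient is `2vφ²∇v + 2φv²∇φ`. By Cauchy–Schwarz the first term has `L¹` norm at most
`2 ‖vφ‖₂ ‖φ∇v‖₂`; since `0 ≤ φ ≤ 1`, `|∇φ| ≤ 2/r` and `∇φ` vanishes off `B(0,2r)`, the second has
`L¹` norm at most `2 (2/r) ∫_{B(0,2r)} v²`. The Gagliardo–Nirenberg constant
`eLpNormLESNormFDerivOneConst` is only known to be nonnegative, so `C_S` is taken one larger.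
-/

section CauchySchwarz
variable {α : Type*} [MeasurableSpace α] {μ : Measure α}

theorem integral_mul_le_rpow_half_mul_rpow_half {f g : α → ℝ} (hf0 : ∀ x, 0 ≤ f x)
    (hg0 : ∀ x, 0 ≤ g x) (hf : MemLp f 2 μ) (hg : MemLp g 2 μ) :
    ∫ x, f x * g x ∂μ ≤ (∫ x, f x ^ 2 ∂μ) ^ (1 / 2 : ℝ) * (∫ x, g x ^ 2 ∂μ) ^ (1 / 2 : ℝ) := by
  have h := integral_mul_le_Lp_mul_Lq_of_nonneg Real.HolderConjugate.two_two
    (Filter.Eventually.of_forall hf0) (Filter.Eventually.of_forall hg0)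
    (by simpa using hf) (by simpa using hg)
  simpa only [← Real.rpow_natCast, Nat.cast_ofNat] using h

end CauchySchwarz

theorem norm_gradient_eq_norm_fderiv {F : Type*} [NormedAddCommGroup F] [InnerProductSpace ℝ F]
    [CompleteSpace F] (f : F → ℝ) (x : F) : ‖gradient f x‖ = ‖fderiv ℝ f x‖ := by
  rw [← toDual_gradient, LinearIsometryEquiv.norm_map]

section Cutoff
variable {E : Type*} [NormedAddCommGroup E] [NormedSpace ℝ E]

theorem norm_fderiv_sq_mul_sq_le {v φ : E → ℝ} {x : E} (hv : DifferentiableAt ℝ v x)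
    (hφ : DifferentiableAt ℝ φ x) :
    ‖fderiv ℝ (fun y => v y ^ 2 * φ y ^ 2) x‖ ≤
      2 * (|v x| * |φ x| * (‖fderiv ℝ v x‖ * |φ x|)) +
        2 * (|φ x| * ‖fderiv ℝ φ x‖ * v x ^ 2) := by
  rw [((hv.hasFDerivAt.pow 2).fun_mul (hφ.hasFDerivAt.pow 2)).fderiv]
  refine (norm_add_le _ _).trans_eq ?_
  simp only [norm_smul, Real.norm_eq_abs, abs_pow, sq_abs]
  norm_num
  rw [← sq_abs (φ x)]
  ring

theorem integral_abs_mul_norm_fderiv_mul_sq_le [MeasurableSpace E] {μ : Measure E}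
    {φ v : E → ℝ} {s : Set E} {L : ℝ} (hs : MeasurableSet s) (hφ : ∀ x, |φ x| ≤ 1)
    (hDφ : ∀ x, ‖fderiv ℝ φ x‖ ≤ L) (hφs : tsupport φ ⊆ s)
    (hv : IntegrableOn (fun x => v x ^ 2) s μ) :
    ∫ x, |φ x| * ‖fderiv ℝ φ x‖ * v x ^ 2 ∂μ ≤ L * ∫ x in s, v x ^ 2 ∂μ := by
  rw [← integral_const_mul, ← integral_indicator hs]
  refine integral_mono_of_nonneg (Filter.Eventually.of_forall fun x => by positivity)
    ((integrable_indicator_iff hs).2 (hv.const_mul L)) (Filter.Eventually.of_forall fun x => ?_)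
  by_cases hx : x ∈ s
  · rw [Set.indicator_of_mem hx]
    calc |φ x| * ‖fderiv ℝ φ x‖ * v x ^ 2 ≤ 1 * L * v x ^ 2 := by
          gcongr
          exacts [hφ x, hDφ x]
      _ = L * v x ^ 2 := by ring
  · dsimp only
    rw [Set.indicator_of_notMem hx, fderiv_of_notMem_tsupport ℝ fun h => hx (hφs h)]
    simp

theorem integral_norm_fderiv_sq_mul_sq_le [MeasurableSpace E] [BorelSpace E] {μ : Measure E}
    [IsFiniteMeasureOnCompacts μ] {v φ : E → ℝ} {s : Set E} {L : ℝ} (hv : ContDiff ℝ 1 v)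
    (hφ : ContDiff ℝ 1 φ) (hφc : HasCompactSupport φ) (hs : MeasurableSet s)
    (hφ1 : ∀ x, |φ x| ≤ 1) (hDφ : ∀ x, ‖fderiv ℝ φ x‖ ≤ L) (hφs : tsupport φ ⊆ s)
    (hvs : IntegrableOn (fun x => v x ^ 2) s μ) :
    ∫ x, ‖fderiv ℝ (fun y => v y ^ 2 * φ y ^ 2) x‖ ∂μ ≤
      2 * ((∫ x, v x ^ 2 * φ x ^ 2 ∂μ) ^ (1 / 2 : ℝ) *
          (∫ x, ‖fderiv ℝ v x‖ ^ 2 * φ x ^ 2 ∂μ) ^ (1 / 2 : ℝ) +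
        L * ∫ x in s, v x ^ 2 ∂μ) := by
  have hcs : ∀ {f : E → ℝ}, (∀ x, φ x = 0 → f x = 0) → HasCompactSupport f :=
    fun h => hφc.mono fun x hx h0 => hx (h x h0)
  have hv_cont := hv.continuous
  have hφ_cont := hφ.continuous
  have hDv_cont := hv.continuous_fderiv one_ne_zero
  have hDφ_cont := hφ.continuous_fderiv one_ne_zero
  have hf : MemLp (fun x => |v x| * |φ x|) 2 μ :=
    (by fun_prop : Continuous _).memLp_of_hasCompactSupport (hcs fun x h => by simp [h])
  have hg : MemLp (fun x => ‖fderiv ℝ v x‖ * |φ x|) 2 μ :=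
    (by fun_prop : Continuous _).memLp_of_hasCompactSupport (hcs fun x h => by simp [h])
  have hfg : Integrable (fun x => |v x| * |φ x| * (‖fderiv ℝ v x‖ * |φ x|)) μ :=
    (by fun_prop : Continuous _).integrable_of_hasCompactSupport (hcs fun x h => by simp [h])
  have hcut : Integrable (fun x => |φ x| * ‖fderiv ℝ φ x‖ * v x ^ 2) μ :=
    (by fun_prop : Continuous _).integrable_of_hasCompactSupport (hcs fun x h => by simp [h])
  calc ∫ x, ‖fderiv ℝ (fun y => v y ^ 2 * φ y ^ 2) x‖ ∂μ
      ≤ ∫ x, 2 * (|v x| * |φ x| * (‖fderiv ℝ v x‖ * |φ x|)) +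
          2 * (|φ x| * ‖fderiv ℝ φ x‖ * v x ^ 2) ∂μ :=
        integral_mono_of_nonneg (Filter.Eventually.of_forall fun x => norm_nonneg _)
          ((hfg.const_mul 2).add (hcut.const_mul 2))
          (Filter.Eventually.of_forall fun x => norm_fderiv_sq_mul_sq_le
            (hv.differentiable one_ne_zero x) (hφ.differentiable one_ne_zero x))
    _ = 2 * ∫ x, |v x| * |φ x| * (‖fderiv ℝ v x‖ * |φ x|) ∂μ +
          2 * ∫ x, |φ x| * ‖fderiv ℝ φ x‖ * v x ^ 2 ∂μ := by
        rw [integral_add (hfg.const_mul 2) (hcut.const_mul 2), integral_const_mul,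
          integral_const_mul]
    _ ≤ _ := by
        rw [mul_add]
        gcongr
        · simpa only [mul_pow, sq_abs] using integral_mul_le_rpow_half_mul_rpow_half
            (fun x => by positivity) (fun x => by positivity) hf hg
        · exact integral_abs_mul_norm_fderiv_mul_sq_le hs hφ1 hDφ hφs hvs

end Cutoff

section GagliardoNirenberg
variable {E F : Type*} [NormedAddCommGroup E] [NormedSpace ℝ E] [MeasurableSpace E] [BorelSpace E]
  [FiniteDimensional ℝ E] [NormedAddCommGroup F] [NormedSpace ℝ F]
  (μ : Measure E) [μ.IsAddHaarMeasure]

theorem integral_norm_sq_rpow_half_le_integral_norm_fderiv (hE : finrank ℝ E = 2) {u : E → F}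
    (hu : ContDiff ℝ 1 u) (h2u : HasCompactSupport u) :
    (∫ x, ‖u x‖ ^ 2 ∂μ) ^ (1 / 2 : ℝ) ≤
      eLpNormLESNormFDerivOneConst μ 2 * ∫ x, ‖fderiv ℝ u x‖ ∂μ := by
  have hp : NNReal.HolderConjugate (finrank ℝ E) 2 := by
    rw [hE]; exact NNReal.HolderConjugate.two_two
  have h := eLpNorm_le_eLpNorm_fderiv_one μ hu h2u hp
  have hDu : Integrable (fderiv ℝ u) μ :=
    (hu.continuous_fderiv one_ne_zero).integrable_of_hasCompactSupport (h2u.fderiv (𝕜 := ℝ))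
  rw [(hu.continuous.memLp_of_hasCompactSupport h2u).eLpNorm_eq_integral_rpow_norm
      (by norm_num) (by norm_num), eLpNorm_one_eq_lintegral_enorm,
    ← ofReal_integral_norm_eq_lintegral_enorm hDu] at h
  have := ENNReal.toReal_mono (by finiteness) h
  rw [ENNReal.toReal_mul, ENNReal.toReal_ofReal (by positivity),
    ENNReal.toReal_ofReal (by positivity)] at this
  simpa using this

end GagliardoNirenberg

/-- Local Gagliardo–Nirenberg step of the Moser iteration on `ℝ²`. -/
theorem stmt_8 :
    ∃ CS : ℝ, 0 < CS ∧
      ∀ r : ℝ, 0 < r →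
      ∀ v φ : EuclideanSpace ℝ (Fin 2) → ℝ,
        ContDiff ℝ 1 v → ContDiff ℝ 1 φ →
        HasCompactSupport φ →
        tsupport φ ⊆ Metric.ball (0 : EuclideanSpace ℝ (Fin 2)) (2 * r) →
        (∀ x, 0 ≤ φ x) → (∀ x, φ x ≤ 1) →
        (∀ x, ‖gradient φ x‖ ≤ 2 / r) →
        (∫ x, v x ^ 4 * φ x ^ 4) ^ (1 / 2 : ℝ) ≤
          2 * CS * ((∫ x, v x ^ 2 * φ x ^ 2) ^ (1 / 2 : ℝ) *
              (∫ x, ‖gradient v x‖ ^ 2 * φ x ^ 2) ^ (1 / 2 : ℝ) +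
            (2 / r) * ∫ x in Metric.ball (0 : EuclideanSpace ℝ (Fin 2)) (2 * r), v x ^ 2) := by
  set C := eLpNormLESNormFDerivOneConst (volume : Measure (EuclideanSpace ℝ (Fin 2))) 2
  refine ⟨(C : ℝ) + 1, by positivity, fun r hr v φ hv hφ hφc hφB hφ0 hφ1 hDφ => ?_⟩
  simp only [norm_gradient_eq_norm_fderiv] at hDφ ⊢
  have hu : ContDiff ℝ 1 fun x => v x ^ 2 * φ x ^ 2 := (hv.pow 2).mul (hφ.pow 2)
  have hGNS := integral_norm_sq_rpow_half_le_integral_norm_fderiv volume (by simp) hu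
    (hφc.mono fun x hx h0 => hx (by simp [h0]))
  have hD := integral_norm_fderiv_sq_mul_sq_le (μ := volume) hv hφ hφc measurableSet_ball
    (fun x => abs_le.2 ⟨by linarith [hφ0 x], hφ1 x⟩) hDφ hφB
    ((hv.continuous.pow 2).continuousOn.integrableOn_compact (isCompact_closedBall 0 (2 * r))
      |>.mono_set Metric.ball_subset_closedBall)
  have h4 : (∫ x, ‖v x ^ 2 * φ x ^ 2‖ ^ 2) = ∫ x, v x ^ 4 * φ x ^ 4 := by
    congr 1 with x
    rw [Real.norm_eq_abs, sq_abs]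
    ring
  rw [h4] at hGNS
  refine hGNS.trans ((mul_le_mul_of_nonneg_left hD C.coe_nonneg).trans ?_)
  rw [mul_left_comm, mul_assoc]
  gcongr
  linarith
end

section
/- Let γ ∈ (1/2, 1), B ≥ 1 and C ≥ 1 be real numbers, and let U : (0,∞) → [0,∞) be a function such that: (i) U(s) ≤ B for all s ∈ (0, 2], and (ii) U(4p) ≤ C^{1/(2p)} (2p)^{1/(2p)} U(4γ(p − 1/2))^{(p − 1/2)/p} for every real p > 1/2. Then there exists a constant C′ > 0, depending only on γ, B and C, such that U(4p) ≤ C′ for every p > 0. -/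
open Real

/-- Abstract Moser-iteration recursion: if `U ≤ B` on `(0,2]` and
`U(4p) ≤ C^{1/(2p)} (2p)^{1/(2p)} U(4γ(p−1/2))^{(p−1/2)/p}` for all `p > 1/2`,
then `U(4p)` is bounded uniformly in `p > 0`. -/
theorem stmt_10 (γ B C : ℝ) (hγ : γ ∈ Set.Ioo (1 / 2 : ℝ) 1) (hB : 1 ≤ B) (hC : 1 ≤ C)
    (U : ℝ → ℝ) (hU0 : ∀ s, 0 < s → 0 ≤ U s)
    (hUB : ∀ s, 0 < s → s ≤ 2 → U s ≤ B)
    (hrec : ∀ p : ℝ, 1 / 2 < p →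
      U (4 * p) ≤ C ^ (1 / (2 * p)) * (2 * p) ^ (1 / (2 * p)) *
        U (4 * γ * (p - 1 / 2)) ^ ((p - 1 / 2) / p)) :
    ∃ C' : ℝ, 0 < C' ∧ ∀ p : ℝ, 0 < p → U (4 * p) ≤ C' := by
  obtain ⟨hγ1, hγ2⟩ := hγ
  have hγ0 : (0:ℝ) < γ := by linarith
  have hC0 : (0:ℝ) < C := by linarith
  have hB0 : (0:ℝ) < B := by linarith
  set r : ℝ := Real.sqrt γ with hr
  have hr0 : 0 < r := Real.sqrt_pos.mpr hγ0
  have hr1 : r < 1 := by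
    rw [hr, show (1:ℝ) = Real.sqrt 1 by rw [Real.sqrt_one]]
    exact Real.sqrt_lt_sqrt hγ0.le hγ2
  set K : ℝ := 2 * Real.sqrt C with hK
  have hK0 : (0:ℝ) < K := by positivity
  have hlogsqrt : ∀ x : ℝ, 0 < x → Real.log x ≤ 2 * Real.sqrt x := by
    intro x hx
    have h1 : Real.log (Real.sqrt x) ≤ Real.sqrt x - 1 :=
      Real.log_le_sub_one_of_pos (Real.sqrt_pos.mpr hx)
    rw [Real.log_sqrt hx.le] at h1
    linarith [Real.sqrt_nonneg x]
  -- The step lemma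
  have step : ∀ n : ℕ, ∀ p : ℝ, 1/2 < p → 1 ≤ 2 * γ^n * p → ∀ M : ℝ, 1 ≤ M →
      U (4 * γ * (p - 1/2)) ≤ M → U (4*p) ≤ Real.exp (K * r^n) * M := by
    intro n p hp hγn M hM hUq
    have hp0 : (0:ℝ) < p := by linarith
    have h2p0 : (0:ℝ) < 2*p := by linarith
    have h2Cp : (0:ℝ) < 2*C*p := by positivity
    have hq0 : 0 < 4 * γ * (p - 1/2) := by
      have : (0:ℝ) < p - 1/2 := by linarith
      positivity
    have hθ0 : (0:ℝ) ≤ (p - 1/2)/p := by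
      apply div_nonneg (by linarith) hp0.le
    have hθ1 : (p - 1/2)/p ≤ 1 := by
      rw [div_le_one hp0]; linarith
    have h1 : U (4 * γ * (p - 1/2)) ^ ((p - 1/2)/p) ≤ M := by
      calc U (4 * γ * (p - 1/2)) ^ ((p - 1/2)/p) ≤ M ^ ((p - 1/2)/p) :=
            Real.rpow_le_rpow (hU0 _ hq0) hUq hθ0
        _ ≤ M ^ (1:ℝ) := Real.rpow_le_rpow_of_exponent_le hM hθ1
        _ = M := Real.rpow_one M
    -- bound the multiplicative factor
    have hs : Real.sqrt (2*C*p) ≤ K * r^n * p := by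
      have hKr0 : (0:ℝ) ≤ K * r^n * p := by positivity
      rw [show K*r^n*p = Real.sqrt ((K*r^n*p)^2) from (Real.sqrt_sq hKr0).symm]
      apply Real.sqrt_le_sqrt
      have hK2 : K^2 = 4*C := by
        rw [hK, mul_pow, Real.sq_sqrt hC0.le]; ring
      have hr2 : (r^n)^2 = γ^n := by
        rw [← pow_mul, mul_comm n 2, pow_mul, hr, Real.sq_sqrt hγ0.le]
      have hexp : (K*r^n*p)^2 = 4*C*γ^n*p^2 := by
        rw [show (K*r^n*p)^2 = K^2*(r^n)^2*p^2 by ring, hK2, hr2]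
      rw [hexp]
      nlinarith [mul_le_mul_of_nonneg_left hγn (le_of_lt h2Cp)]
    have h2 : C ^ (1/(2*p)) * (2*p) ^ (1/(2*p)) ≤ Real.exp (K * r^n) := by
      rw [Real.rpow_def_of_pos hC0, Real.rpow_def_of_pos h2p0, ← Real.exp_add,
        Real.exp_le_exp]
      have hlogeq : Real.log (2*C*p) = Real.log C + Real.log (2*p) := by
        rw [show 2*C*p = C*(2*p) by ring, Real.log_mul (ne_of_gt hC0) (ne_of_gt h2p0)]
      have hlog : Real.log (2*C*p) ≤ 2*(K*r^n*p) :=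
        le_trans (hlogsqrt _ h2Cp) (by linarith)
      have heq : Real.log C * (1/(2*p)) + Real.log (2*p) * (1/(2*p))
          = Real.log (2*C*p) * (1/(2*p)) := by rw [hlogeq]; ring
      rw [heq]
      calc Real.log (2*C*p) * (1/(2*p)) ≤ (2*(K*r^n*p)) * (1/(2*p)) :=
            mul_le_mul_of_nonneg_right hlog (by positivity)
        _ = K * r^n := by field_simp
    calc U (4*p) ≤ C ^ (1/(2*p)) * (2*p) ^ (1/(2*p)) *
          U (4 * γ * (p - 1/2)) ^ ((p - 1/2)/p) := hrec p hp
      _ ≤ Real.exp (K * r^n) * M := by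
          apply mul_le_mul h2 h1 (Real.rpow_nonneg (hU0 _ hq0) _) (Real.exp_nonneg _)
  -- bound sequence
  set E : ℕ → ℝ := fun n => B * Real.exp (K * (1 + ∑ i ∈ Finset.range n, r ^ i)) with hE
  have hsum0 : ∀ n : ℕ, (0:ℝ) ≤ ∑ i ∈ Finset.range n, r ^ i :=
    fun n => Finset.sum_nonneg fun i _ => by positivity
  have hBE : ∀ n, B ≤ E n := by
    intro n
    exact le_mul_of_one_le_right hB0.le
      (Real.one_le_exp (mul_nonneg hK0.le (by linarith [hsum0 n])))
  have hE1 : ∀ n, 1 ≤ E n := fun n => le_trans hB (hBE n)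
  have hEsucc : ∀ n, E (n+1) = Real.exp (K * r^n) * E n := by
    intro n
    simp only [hE, Finset.sum_range_succ]
    rw [show K * (1 + (∑ i ∈ Finset.range n, r ^ i + r ^ n))
        = K * r^n + K * (1 + ∑ i ∈ Finset.range n, r ^ i) by ring, Real.exp_add]
    ring
  have hEmono : ∀ n, E n ≤ E (n+1) := by
    intro n
    rw [hEsucc n]
    have h0 : (0:ℝ) ≤ E n := le_trans zero_le_one (hE1 n)
    exact le_mul_of_one_le_left h0 (Real.one_le_exp (by positivity))
  -- key induction
  have key : ∀ n : ℕ, ∀ p : ℝ, 1/2 < p → γ^n * (2*p - 1) ≤ 1 → U (4*p) ≤ E n := by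
    intro n
    induction n with
    | zero =>
      intro p hp hpn
      rw [pow_zero, one_mul] at hpn
      have hq2 : 4 * γ * (p - 1/2) ≤ 2 := by
        nlinarith [mul_nonneg (by linarith : (0:ℝ) ≤ 1 - γ) (by linarith : (0:ℝ) ≤ 2*p - 1)]
      have hq0 : 0 < 4 * γ * (p - 1/2) := by
        have : (0:ℝ) < p - 1/2 := by linarith
        positivity
      have hUq : U (4 * γ * (p - 1/2)) ≤ B := hUB _ hq0 hq2
      have h := step 0 p hp (by rw [pow_zero]; linarith) B hB hUq
      calc U (4*p) ≤ Real.exp (K * r^0) * B := h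
        _ = E 0 := by simp [hE]; ring
    | succ n ih =>
      intro p hp hpn
      by_cases hc : γ^n * (2*p - 1) ≤ 1
      · exact le_trans (ih p hp hc) (hEmono n)
      · push_neg at hc
        have hγn : (0:ℝ) < γ^n := pow_pos hγ0 n
        have hγn1 : (0:ℝ) < γ^(n+1) := pow_pos hγ0 (n+1)
        have hq2cond : γ^n * (2*(γ*(p - 1/2)) - 1) ≤ 1 := by
          have heq : γ^n * (2*(γ*(p - 1/2)) - 1) = γ^(n+1) * (2*p - 1) - γ^n := by ring
          rw [heq]; linarith
        have hq0 : 0 < 4 * γ * (p - 1/2) := by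
          have : (0:ℝ) < p - 1/2 := by linarith
          positivity
        have hUq : U (4 * γ * (p - 1/2)) ≤ E n := by
          by_cases hq : 1/2 < γ*(p - 1/2)
          · have := ih (γ*(p - 1/2)) hq hq2cond
            rwa [← mul_assoc] at this
          · push_neg at hq
            have : U (4 * γ * (p - 1/2)) ≤ B := hUB _ hq0 (by linarith)
            calc U (4 * γ * (p - 1/2)) ≤ B := this
              _ ≤ E n := hBE n
        have hpge : 1 ≤ 2 * γ^n * p := by nlinarith
        have h := step n p hp hpge (E n) (hE1 n) hUq
        calc U (4*p) ≤ Real.exp (K * r^n) * E n := h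
          _ = E (n+1) := (hEsucc n).symm
  -- geometric sum bound
  have hgeom : ∀ m : ℕ, (∑ i ∈ Finset.range m, r ^ i) ≤ 1/(1 - r) := by
    intro m
    have h1 : (∑ i ∈ Finset.range m, r ^ i) * (r - 1) = r ^ m - 1 := geom_sum_mul r m
    rw [le_div_iff₀ (by linarith : (0:ℝ) < 1 - r)]
    nlinarith [pow_nonneg hr0.le m]
  refine ⟨B * Real.exp (K * (1 + 1/(1 - r))), mul_pos hB0 (Real.exp_pos _), ?_⟩
  intro p hp
  by_cases hple : p ≤ 1/2
  · have h4p : 4*p ≤ 2 := by linarith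
    calc U (4*p) ≤ B := hUB _ (by linarith) h4p
      _ ≤ B * Real.exp (K * (1 + 1/(1 - r))) := by
          apply le_mul_of_one_le_right hB0.le
          apply Real.one_le_exp
          have h1r : (0:ℝ) ≤ 1/(1 - r) := div_nonneg zero_le_one (by linarith)
          exact mul_nonneg hK0.le (by linarith)
  · push_neg at hple
    have h2p1 : (0:ℝ) < 2*p - 1 := by linarith
    obtain ⟨n, hn⟩ := exists_pow_lt_of_lt_one (by positivity : (0:ℝ) < (2*p - 1)⁻¹) hγ2
    have hcond : γ^n * (2*p - 1) ≤ 1 := by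
      have := (lt_div_iff₀ h2p1).mp (by rwa [← one_div] at hn)
      linarith
    have hEle : E n ≤ B * Real.exp (K * (1 + 1/(1 - r))) := by
      apply mul_le_mul_of_nonneg_left _ hB0.le
      apply Real.exp_le_exp.mpr
      have := hgeom n
      nlinarith
    exact le_trans (key n p hple hcond) hEle
end

section
/- Let γ ∈ (0,1), set μ = 1/γ, let (p_i)_{i≥0} be a sequence of real numbers with p_{i+1} = γ(p_i − 1/2) for all i, and let k be a nonnegative integer such that γ < γ^{k+1} ( γ + 2(1−γ) p_0 ) ≤ 1. Then for every integer i with 0 ≤ i ≤ k, ∑_{m=0}^{k−i} μ^m < 2 p_i ≤ ∑_{m=0}^{k+1−i} μ^m. -/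
/-!
Writing `A = γ + 2(1 - γ)p₀`, the recursion solves to `2(1 - γ)pᵢ = γⁱA - γ`, while
`(1 - γ)γⁿ ∑_{m ≤ n} γ⁻ᵐ = 1 - γⁿ⁺¹`. Multiplying by `(1 - γ)γⁿ > 0` therefore turns the comparison
of `2pᵢ` with `∑_{m ≤ n} μᵐ` into the comparison of `γⁿ⁺ⁱA` with `1`; the hypotheses on `k` say
exactly `γᵏA > 1 ≥ γᵏ⁺¹A`.
-/

open Finset

section Field

variable {K : Type*} [Field K]

theorem geom_sum_inv_mul_pow {γ : K} (hγ : γ ≠ 0) (n : ℕ) :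
    (∑ m ∈ range (n + 1), γ⁻¹ ^ m) * γ ^ n = ∑ m ∈ range (n + 1), γ ^ m := by
  induction n with
  | zero => simp
  | succ n ih =>
    have hcancel : γ⁻¹ ^ (n + 1) * γ ^ (n + 1) = 1 := by
      rw [← mul_pow, inv_mul_cancel₀ hγ, one_pow]
    rw [sum_range_succ, geom_sum_succ (x := γ), ← ih]
    linear_combination hcancel

variable [CharZero K]

theorem two_mul_one_sub_mul_eq_of_rec {γ : K} {p : ℕ → K}
    (hrec : ∀ i, p (i + 1) = γ * (p i - 1 / 2)) (i : ℕ) :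
    2 * (1 - γ) * p i = γ ^ i * (γ + 2 * (1 - γ) * p 0) - γ := by
  induction i with
  | zero => ring
  | succ i ih =>
    rw [hrec i, pow_succ]
    linear_combination γ * ih

theorem two_mul_sub_geom_sum_inv_mul_eq_of_rec {γ : K} (hγ : γ ≠ 0) {p : ℕ → K}
    (hrec : ∀ i, p (i + 1) = γ * (p i - 1 / 2)) (i n : ℕ) :
    (2 * p i - ∑ m ∈ range (n + 1), γ⁻¹ ^ m) * ((1 - γ) * γ ^ n) =
      γ ^ (n + i) * (γ + 2 * (1 - γ) * p 0) - 1 := by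
  have hsum : (∑ m ∈ range (n + 1), γ⁻¹ ^ m) * γ ^ n * (1 - γ) = 1 - γ ^ (n + 1) := by
    rw [geom_sum_inv_mul_pow hγ, mul_comm, mul_neg_geom_sum]
  linear_combination γ ^ n * two_mul_one_sub_mul_eq_of_rec hrec i - hsum
    + (γ + 2 * (1 - γ) * p 0) * (pow_add γ n i).symm

end Field

section LinearOrderedField

variable {K : Type*} [Field K] [LinearOrder K] [IsStrictOrderedRing K]
  {γ : K} (hγ : γ ∈ Set.Ioo 0 1) {p : ℕ → K} (hrec : ∀ i, p (i + 1) = γ * (p i - 1 / 2))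
  (i n : ℕ)
include hγ hrec

theorem geom_sum_inv_lt_two_mul_iff_of_rec :
    ∑ m ∈ range (n + 1), γ⁻¹ ^ m < 2 * p i ↔ 1 < γ ^ (n + i) * (γ + 2 * (1 - γ) * p 0) := by
  have hpos : 0 < (1 - γ) * γ ^ n := mul_pos (sub_pos.2 hγ.2) (pow_pos hγ.1 n)
  rw [← sub_pos, ← sub_pos (b := (1 : K)),
    ← two_mul_sub_geom_sum_inv_mul_eq_of_rec hγ.1.ne' hrec, mul_pos_iff_of_pos_right hpos]

theorem two_mul_le_geom_sum_inv_iff_of_rec :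
    2 * p i ≤ ∑ m ∈ range (n + 1), γ⁻¹ ^ m ↔ γ ^ (n + i) * (γ + 2 * (1 - γ) * p 0) ≤ 1 := by
  simpa only [not_lt] using (geom_sum_inv_lt_two_mul_iff_of_rec hγ hrec i n).not

end LinearOrderedField

/-- Bracketing of the Moser iteration exponents between consecutive geometric sums:
`∑_{m=0}^{k−i} μ^m < 2p_i ≤ ∑_{m=0}^{k+1−i} μ^m` with `μ = 1/γ`. -/
theorem stmt_14 (γ : ℝ) (hγ : γ ∈ Set.Ioo (0 : ℝ) 1) (μ : ℝ) (hμ : μ = 1 / γ)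
    (p : ℕ → ℝ) (hrec : ∀ i, p (i + 1) = γ * (p i - 1 / 2)) (k : ℕ)
    (hk1 : γ < γ ^ (k + 1) * (γ + 2 * (1 - γ) * p 0))
    (hk2 : γ ^ (k + 1) * (γ + 2 * (1 - γ) * p 0) ≤ 1) :
    ∀ i : ℕ, i ≤ k →
      (∑ m ∈ Finset.range (k - i + 1), μ ^ m) < 2 * p i ∧
      2 * p i ≤ ∑ m ∈ Finset.range (k + 1 - i + 1), μ ^ m := by
  intro i hi
  rw [hμ, one_div]
  have hk : 1 < γ ^ k * (γ + 2 * (1 - γ) * p 0) := by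
    rw [pow_succ', mul_assoc] at hk1
    exact lt_of_mul_lt_mul_left (by rwa [mul_one]) hγ.1.le
  constructor
  · rwa [geom_sum_inv_lt_two_mul_iff_of_rec hγ hrec, Nat.sub_add_cancel hi]
  · rwa [two_mul_le_geom_sum_inv_iff_of_rec hγ hrec, Nat.sub_add_cancel (by omega)]
end

section
/- Let γ ∈ (1/2, 1), set μ = 1/γ, let p_* > 0, let p_0 ≥ p_*, let (p_i)_{i≥0} satisfy p_{i+1} = γ(p_i − 1/2) for all i, and let k be a nonnegative integer such that γ < γ^{k+1} ( γ + 2(1−γ) p_0 ) ≤ 1. Then ∏_{i=0}^{k} (2 p_i)^{1/(2 γ^i p_0)} ≤ ( 1/(μ − 1) ) · μ^{ ( μ(2μ−1)/(μ−1)² ) · ( γ + 2(1−γ) p_* )/(2 p_*) }, a bound independent of k and of p_0. -/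
/-!
The quantity `γ + 2(1 - γ) p_i` is multiplied by `γ` at each step, so with
`c = γ + 2(1 - γ) p_0` we get `2 p_i ≤ γ^i c / (1 - γ)`, and `γ^k c > 1` makes every factor `2 p_i`
exceed `1`. Taking logarithms and reading the sum backwards from `i = k`, the weights
`1 / (2 γ^i p_0)` become `γ^j / d` with `d = 2 γ^k p_0`, and the logarithms become
`log V + j log μ` with `V = γ^k c / (1 - γ) ≤ μ² / (μ - 1)` because `γ^(k+1) c ≤ 1`.
The sums `∑ γ^j` and `∑ j γ^j` are geometric, and the lower bound `γ^k c > 1`, rewritten as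
`1 < γ^(k+1) + (1 - γ) d`, gives both `∑_{j ≤ k} γ^j ≤ d` and `1 / d ≤ 1 - γ + γ / (2 p_*)`.
-/

open Real Finset

section

variable {γ : ℝ}

theorem add_two_mul_one_sub_mul_eq_pow_mul {p : ℕ → ℝ}
    (hrec : ∀ i, p (i + 1) = γ * (p i - 1 / 2)) (i : ℕ) :
    γ + 2 * (1 - γ) * p i = γ ^ i * (γ + 2 * (1 - γ) * p 0) := by
  induction i with
  | zero => ring
  | succ i ih => rw [hrec, pow_succ']; linear_combination γ * ih

theorem sum_pow_sub_mul_log_pow_mul_le (hγ0 : 0 < γ) (hγ1 : γ < 1) {U : ℝ} (hU : U ≠ 0)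
    (k : ℕ) :
    ∑ i ∈ range (k + 1), γ ^ (k - i) * log (γ ^ i * U) ≤
      (1 - γ ^ (k + 1)) / (1 - γ) * log (γ ^ k * U) + γ / (1 - γ) ^ 2 * log γ⁻¹ := by
  have hterm : ∀ j ∈ range (k + 1), γ ^ (k - (k - j)) * log (γ ^ (k - j) * U) =
      log (γ ^ k * U) * γ ^ j + log γ⁻¹ * (j * γ ^ j) := by
    intro j hj
    have hjk : j ≤ k := Nat.lt_succ_iff.mp (mem_range.mp hj)
    rw [Nat.sub_sub_self hjk, pow_sub₀ γ hγ0.ne' hjk, log_mul (by positivity) hU,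
      log_mul (by positivity) hU, log_mul (by positivity) (inv_ne_zero (pow_ne_zero _ hγ0.ne')),
      log_pow, log_inv, log_pow, log_inv]
    ring
  have hgeom : ∑ j ∈ range (k + 1), γ ^ j = (1 - γ ^ (k + 1)) / (1 - γ) := by
    rw [geom_sum_eq hγ1.ne, ← neg_div_neg_eq, neg_sub, neg_sub]
  have harith : ∑ j ∈ range (k + 1), (j : ℝ) * γ ^ j ≤ γ / (1 - γ) ^ 2 :=
    sum_le_hasSum _ (fun j _ => by positivity)
      (hasSum_coe_mul_geometric_of_norm_lt_one (by rwa [norm_of_nonneg hγ0.le]))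
  rw [← sum_range_reflect, Nat.add_sub_cancel, sum_congr rfl hterm, sum_add_distrib,
    ← mul_sum, ← mul_sum, hgeom]
  have hlog : 0 ≤ log γ⁻¹ := log_nonneg (one_le_inv₀ hγ0 |>.mpr hγ1.le)
  linarith [mul_le_mul_of_nonneg_left harith hlog]

theorem one_lt_two_mul_of_rec (hγ0 : 0 < γ) (hγ1 : γ < 1) {p : ℕ → ℝ}
    (hrec : ∀ i, p (i + 1) = γ * (p i - 1 / 2)) {i k : ℕ} (hik : i ≤ k)
    (hk : γ < γ ^ (k + 1) * (γ + 2 * (1 - γ) * p 0)) :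
    1 < 2 * p i := by
  have hc : 1 < γ ^ k * (γ + 2 * (1 - γ) * p 0) := by
    rwa [pow_succ', mul_assoc, lt_mul_iff_one_lt_right hγ0] at hk
  have hc0 : 0 < γ + 2 * (1 - γ) * p 0 := pos_of_mul_pos_right (one_pos.trans hc) (by positivity)
  have hki : γ ^ k * (γ + 2 * (1 - γ) * p 0) ≤ γ ^ i * (γ + 2 * (1 - γ) * p 0) :=
    mul_le_mul_of_nonneg_right (pow_le_pow_of_le_one hγ0.le hγ1.le hik) hc0.le
  have hpi := add_two_mul_one_sub_mul_eq_pow_mul hrec i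
  have hmul : (1 - γ) * 1 < (1 - γ) * (2 * p i) := by linarith
  exact lt_of_mul_lt_mul_left hmul (by linarith)

theorem two_mul_le_of_rec (hγ0 : 0 ≤ γ) (hγ1 : γ < 1) {p : ℕ → ℝ}
    (hrec : ∀ i, p (i + 1) = γ * (p i - 1 / 2)) (i : ℕ) :
    2 * p i ≤ γ ^ i * ((γ + 2 * (1 - γ) * p 0) / (1 - γ)) := by
  rw [mul_div_assoc', le_div_iff₀ (by linarith), ← add_two_mul_one_sub_mul_eq_pow_mul hrec]
  linarith

theorem one_sub_pow_succ_div_le_two_mul_pow_mul (hγ0 : 0 < γ) (hγ1 : γ < 1) {p₀ : ℝ} {k : ℕ}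
    (hk : γ < γ ^ (k + 1) * (γ + 2 * (1 - γ) * p₀)) :
    (1 - γ ^ (k + 1)) / (1 - γ) ≤ 2 * γ ^ k * p₀ := by
  have hlower : γ * 1 < γ * (γ ^ (k + 1) + (1 - γ) * (2 * γ ^ k * p₀)) := by
    linear_combination hk
  rw [div_le_iff₀ (by linarith)]
  linarith [lt_of_mul_lt_mul_left hlower hγ0.le]

theorem inv_two_mul_pow_mul_le (hγ0 : 0 < γ) {pstar p₀ : ℝ} (hpstar : 0 < pstar)
    (hp₀ : pstar ≤ p₀) {k : ℕ} (hk : γ < γ ^ (k + 1) * (γ + 2 * (1 - γ) * p₀)) :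
    (2 * γ ^ k * p₀)⁻¹ ≤ 1 - γ + γ / (2 * pstar) := by
  have hp₀0 : 0 < p₀ := hpstar.trans_le hp₀
  have hsplit : γ * ((1 - γ + γ / (2 * p₀)) * (2 * γ ^ k * p₀)) =
      γ ^ (k + 1) * (γ + 2 * (1 - γ) * p₀) := by
    field_simp; ring
  calc (2 * γ ^ k * p₀)⁻¹ ≤ 1 - γ + γ / (2 * p₀) := by
        rw [inv_le_iff_one_le_mul₀ (by positivity)]
        refine (lt_of_mul_lt_mul_left ?_ hγ0.le).le
        rwa [mul_one, hsplit]
    _ ≤ 1 - γ + γ / (2 * pstar) := by gcongr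

theorem log_pow_mul_div_one_sub_le (hγ0 : 0 < γ) (hγ1 : γ < 1) {c : ℝ} (hc : 0 < c) {k : ℕ}
    (hk : γ ^ (k + 1) * c ≤ 1) :
    log (γ ^ k * (c / (1 - γ))) ≤ log (γ / (1 - γ)) + 2 * log γ⁻¹ := by
  have h1γ : 0 < 1 - γ := by linarith
  have hle : γ ^ k * (c / (1 - γ)) ≤ γ / (1 - γ) * γ⁻¹ ^ 2 := by
    rw [pow_succ] at hk
    field_simp
    linarith
  calc _ ≤ log (γ / (1 - γ) * γ⁻¹ ^ 2) := log_le_log (by positivity) hle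
    _ = _ := by rw [log_mul (by positivity) (by positivity), log_pow]; push_cast; ring

theorem sum_one_div_mul_log_le (hγ_half : 1 / 2 ≤ γ) (hγ1 : γ < 1) {pstar p₀ : ℝ}
    (hpstar : 0 < pstar) (hp₀ : pstar ≤ p₀) {k : ℕ}
    (hk1 : γ < γ ^ (k + 1) * (γ + 2 * (1 - γ) * p₀))
    (hk2 : γ ^ (k + 1) * (γ + 2 * (1 - γ) * p₀) ≤ 1) :
    ∑ i ∈ range (k + 1), 1 / (2 * γ ^ i * p₀) * log (γ ^ i * ((γ + 2 * (1 - γ) * p₀) / (1 - γ)))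
      ≤ log (γ / (1 - γ)) + (2 - γ) / (1 - γ) ^ 2 * (1 - γ + γ / (2 * pstar)) * log γ⁻¹ := by
  have hγ0 : 0 < γ := by linarith
  have h1γ : 0 < 1 - γ := by linarith
  have hp₀0 : 0 < p₀ := hpstar.trans_le hp₀
  have hd : 0 < 2 * γ ^ k * p₀ := by positivity
  have hx1 : γ ^ (k + 1) ≤ 1 := pow_le_one₀ hγ0.le hγ1.le
  have hc : 0 < γ + 2 * (1 - γ) * p₀ := by positivity
  have hlog_b : 0 ≤ log (γ / (1 - γ)) := log_nonneg (by rw [le_div_iff₀ h1γ]; linarith)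
  have hlog_μ : 0 ≤ log γ⁻¹ := log_nonneg (one_le_inv₀ hγ0 |>.mpr hγ1.le)
  have hweight : ∀ i ∈ range (k + 1), 1 / (2 * γ ^ i * p₀) = (2 * γ ^ k * p₀)⁻¹ * γ ^ (k - i) := by
    intro i hi
    rw [pow_sub₀ γ hγ0.ne' (Nat.lt_succ_iff.mp (mem_range.mp hi))]
    field_simp
  calc _ = (2 * γ ^ k * p₀)⁻¹ * ∑ i ∈ range (k + 1),
          γ ^ (k - i) * log (γ ^ i * ((γ + 2 * (1 - γ) * p₀) / (1 - γ))) := by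
        rw [mul_sum]; exact sum_congr rfl fun i hi => by rw [hweight i hi, mul_assoc]
    _ ≤ (2 * γ ^ k * p₀)⁻¹ * ((1 - γ ^ (k + 1)) / (1 - γ) * (log (γ / (1 - γ)) + 2 * log γ⁻¹)
          + γ / (1 - γ) ^ 2 * log γ⁻¹) := by
        gcongr
        refine (sum_pow_sub_mul_log_pow_mul_le hγ0 hγ1 (by positivity) k).trans ?_
        gcongr
        exact log_pow_mul_div_one_sub_le hγ0 hγ1 hc hk2
    _ = (1 - γ ^ (k + 1)) / (1 - γ) / (2 * γ ^ k * p₀) * log (γ / (1 - γ))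
          + (2 * γ ^ k * p₀)⁻¹ * ((2 * (1 - γ ^ (k + 1)) * (1 - γ) + γ) / (1 - γ) ^ 2)
            * log γ⁻¹ := by
        field_simp; ring
    _ ≤ 1 * log (γ / (1 - γ)) + (1 - γ + γ / (2 * pstar)) * ((2 - γ) / (1 - γ) ^ 2) * log γ⁻¹ := by
        gcongr
        · exact (div_le_one hd).mpr (one_sub_pow_succ_div_le_two_mul_pow_mul hγ0 hγ1 hk1)
        · exact inv_two_mul_pow_mul_le hγ0 hpstar hp₀ hk1
        · nlinarith
    _ = _ := by ring

theorem exp_log_div_one_sub_add_mul_log_inv (hγ0 : 0 < γ) (hγ1 : γ < 1) {pstar : ℝ}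
    (hpstar : pstar ≠ 0) :
    exp (log (γ / (1 - γ)) + (2 - γ) / (1 - γ) ^ 2 * (1 - γ + γ / (2 * pstar)) * log γ⁻¹) =
      1 / (γ⁻¹ - 1) *
        γ⁻¹ ^ (γ⁻¹ * (2 * γ⁻¹ - 1) / (γ⁻¹ - 1) ^ 2 * (γ + 2 * (1 - γ) * pstar) / (2 * pstar)) := by
  have h1γ : 0 < 1 - γ := by linarith
  have hb : 1 / (γ⁻¹ - 1) = γ / (1 - γ) := by field_simp
  have hE : γ⁻¹ * (2 * γ⁻¹ - 1) / (γ⁻¹ - 1) ^ 2 * (γ + 2 * (1 - γ) * pstar) / (2 * pstar) =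
      (2 - γ) / (1 - γ) ^ 2 * (1 - γ + γ / (2 * pstar)) := by
    field_simp; ring
  rw [hb, hE, rpow_def_of_pos (inv_pos.mpr hγ0), exp_add, exp_log (div_pos hγ0 h1γ),
    mul_comm (log _)]

end

/-- Uniform bound, independent of `k` and `p_0`, for the accumulated polynomial factor
`∏_{i=0}^{k} (2p_i)^{1/(2γ^i p_0)}` of the Moser iteration. -/
theorem stmt_16 (γ : ℝ) (hγ : γ ∈ Set.Ioo (1 / 2 : ℝ) 1) (μ : ℝ) (hμ : μ = 1 / γ)
    (pstar : ℝ) (hpstar : 0 < pstar)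
    (p : ℕ → ℝ) (hp0 : pstar ≤ p 0)
    (hrec : ∀ i, p (i + 1) = γ * (p i - 1 / 2)) (k : ℕ)
    (hk1 : γ < γ ^ (k + 1) * (γ + 2 * (1 - γ) * p 0))
    (hk2 : γ ^ (k + 1) * (γ + 2 * (1 - γ) * p 0) ≤ 1) :
    ∏ i ∈ Finset.range (k + 1), (2 * p i) ^ (1 / (2 * γ ^ i * p 0)) ≤
      (1 / (μ - 1)) *
        μ ^ ((μ * (2 * μ - 1) / (μ - 1) ^ 2) * (γ + 2 * (1 - γ) * pstar) / (2 * pstar)) := by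
  have hγ0 : 0 < γ := by linarith [hγ.1]
  have hp0_pos : 0 < p 0 := hpstar.trans_le hp0
  have hp_pos : ∀ i ∈ range (k + 1), 0 < 2 * p i := fun i hi =>
    one_pos.trans (one_lt_two_mul_of_rec hγ0 hγ.2 hrec (Nat.lt_succ_iff.mp (mem_range.mp hi)) hk1)
  calc ∏ i ∈ range (k + 1), (2 * p i) ^ (1 / (2 * γ ^ i * p 0))
      ≤ ∏ i ∈ range (k + 1),
          (γ ^ i * ((γ + 2 * (1 - γ) * p 0) / (1 - γ))) ^ (1 / (2 * γ ^ i * p 0)) := by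
        refine prod_le_prod (fun i hi => (rpow_pos_of_pos (hp_pos i hi) _).le) fun i hi => ?_
        exact rpow_le_rpow (hp_pos i hi).le (two_mul_le_of_rec hγ0.le hγ.2 hrec i)
          (by positivity)
    _ = exp (∑ i ∈ range (k + 1),
          1 / (2 * γ ^ i * p 0) * log (γ ^ i * ((γ + 2 * (1 - γ) * p 0) / (1 - γ)))) := by
        rw [exp_sum]
        refine prod_congr rfl fun i hi => ?_
        rw [rpow_def_of_pos ((hp_pos i hi).trans_le (two_mul_le_of_rec hγ0.le hγ.2 hrec i)),
          mul_comm]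
    _ ≤ exp (log (γ / (1 - γ)) + (2 - γ) / (1 - γ) ^ 2 * (1 - γ + γ / (2 * pstar)) * log γ⁻¹) :=
        exp_le_exp.mpr (sum_one_div_mul_log_le hγ.1.le hγ.2 hpstar hp0 hk1 hk2)
    _ = _ := by
        rw [hμ, one_div γ, exp_log_div_one_sub_add_mul_log_inv hγ0 hγ.2 hpstar.ne']
end
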